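/- arXiv:2012.11091 — 6 statements merged into one kernel-verified Lean document; each statement's English description precedes it below -/
import Mathlib

section
/- For every positive integer n that is a multiple of 3, there exists an orientation of the n-dimensional hypercube graph Q_n that is a (2,3)-cordial digraph; that is, Q_n is (2,3)-orientable for every n divisible by 3. -/
open Finset

/-- The induced arc label: `g(u→v) = f(v) - f(u)`, as an integer. -/
def arcLabel {V : Type*} (f : V → Fin 2) (p : V × V) : ℤ :=
  (f p.2 : ℤ) - (f p.1 : ℤ)

/-- The number of arcs of `A` receiving induced label `i` from the vertex labeling `f`. -/
def labelCount {V : Type*} (A : Finset (V × V)) (f : V → Fin 2) (i : ℤ) : ℕ :=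
  (A.filter (fun p => arcLabel f p = i)).card

/-- A `(0,1)`-labeling is friendly if `-1 ≤ |f⁻¹(0)| - |f⁻¹(1)| ≤ 1`. -/
def Friendly {V : Type*} [Fintype V] (f : V → Fin 2) : Prop :=
  -1 ≤ (((univ.filter (fun v => f v = 0)).card : ℤ) -
        ((univ.filter (fun v => f v = 1)).card : ℤ)) ∧
  (((univ.filter (fun v => f v = 0)).card : ℤ) -
        ((univ.filter (fun v => f v = 1)).card : ℤ)) ≤ 1

/-- A digraph (given by its arc set `A`) is `(2,3)`-cordial if some friendly vertex
labeling induces an arc labeling in which the counts of labels `-1, 0, 1`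
pairwise differ by at most one. -/
def Cordial23 {V : Type*} [Fintype V] (A : Finset (V × V)) : Prop :=
  ∃ f : V → Fin 2, Friendly f ∧
    ∀ i ∈ ({-1, 0, 1} : Finset ℤ), ∀ j ∈ ({-1, 0, 1} : Finset ℤ),
      -1 ≤ ((labelCount A f i : ℤ) - (labelCount A f j : ℤ)) ∧
      ((labelCount A f i : ℤ) - (labelCount A f j : ℤ)) ≤ 1

/-- `A` has no digons (in particular, no loops). -/
def NoDigons {V : Type*} (A : Finset (V × V)) : Prop :=
  ∀ u v : V, (u, v) ∈ A → (v, u) ∉ A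

/-- `A` is an orientation of the (symmetric, irreflexive) adjacency `Adj`:
every arc is along an edge, and each edge gets exactly one direction. -/
def IsOrientation {V : Type*} (Adj : V → V → Prop) (A : Finset (V × V)) : Prop :=
  (∀ p ∈ A, Adj p.1 p.2) ∧ ∀ u v : V, Adj u v → (((u, v) ∈ A) ↔ ((v, u) ∉ A))

/-- Adjacency in the `n`-dimensional hypercube graph `Q_n` on vertex set `{0,1}^n`:
two vertices are adjacent iff they differ in exactly one coordinate. -/
def hammingAdj {n : ℕ} (u v : Fin n → Fin 2) : Prop :=
  (Finset.univ.filter (fun i => u i ≠ v i)).card = 1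

/-!
Orient each edge `{u, u + eᵢ}` of `Q_n` away from the endpoint with `uᵢ = 0`, and label a vertex
by the parity of its coordinates in a set `S` of `2n/3` directions. An arc in a direction outside
`S` gets label `0`; an arc in a direction inside `S` gets `+1` or `-1` according to the parity of
its tail. Flipping a second coordinate of `S` is an involution that fixes the arc direction and
exchanges the two parities, so among the `2^(n-1)` arcs in each direction of `S` exactly half get
`+1`. Every label therefore occurs on `(n/3) · 2^(n-1)` arcs, and the same involution makes the
vertex labeling friendly.
-/

section Involution

variable {α : Type*}

theorem card_filter_eq_of_involutive (s : Finset α) {p q : α → Prop} [DecidablePred p]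
    [DecidablePred q] {σ : α → α} (hσ : Function.Involutive σ) (hs : ∀ a ∈ s, σ a ∈ s)
    (hpq : ∀ a, q (σ a) ↔ p a) : #(s.filter p) = #(s.filter q) := by
  refine card_nbij' σ σ (fun a ha => ?_) (fun a ha => ?_) (fun a _ => hσ a) (fun a _ => hσ a)
  · simp only [coe_filter, Set.mem_ofPred_eq] at ha ⊢
    exact ⟨hs a ha.1, (hpq a).2 ha.2⟩
  · simp only [coe_filter, Set.mem_ofPred_eq] at ha ⊢
    exact ⟨hs a ha.1, (hpq (σ a)).1 (by rw [hσ a]; exact ha.2)⟩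

theorem two_mul_card_filter_of_involutive (s : Finset α) {p : α → Prop} [DecidablePred p]
    {σ : α → α} (hσ : Function.Involutive σ) (hs : ∀ a ∈ s, σ a ∈ s)
    (hp : ∀ a, p (σ a) ↔ ¬ p a) : 2 * #(s.filter p) = #s := by
  rw [two_mul]
  nth_rw 2 [card_filter_eq_of_involutive s hσ hs (q := fun a => ¬ p a)
    fun a => by rw [hp, not_not]]
  exact card_filter_add_card_filter_not p

end Involution

theorem fin_two_add_one_eq_iff (x y : Fin 2) : x + 1 = y ↔ x ≠ y := by
  revert x y; decide

theorem fin_two_ne_zero_iff (x : Fin 2) : x ≠ 0 ↔ x = 1 := by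
  revert x; decide

section Hypercube

variable {ι : Type*} [DecidableEq ι]

theorem add_single_add_single (v : ι → Fin 2) (i : ι) :
    v + Pi.single i 1 + Pi.single i 1 = v := by
  rw [add_assoc, ← Pi.single_add, show (1 + 1 : Fin 2) = 0 from rfl, Pi.single_zero, add_zero]

theorem add_single_injective (v : ι → Fin 2) :
    Function.Injective fun i => v + Pi.single i (1 : Fin 2) := by
  intro i j h
  by_contra hij
  simpa [Pi.single_eq_of_ne hij] using congrFun h i

theorem hammingAdj_iff {n : ℕ} {u v : Fin n → Fin 2} :
    hammingAdj u v ↔ ∃ i, v = u + Pi.single i 1 := by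
  simp only [hammingAdj, card_eq_one, Finset.ext_iff, mem_filter, mem_univ, true_and,
    mem_singleton]
  refine exists_congr fun i => ⟨fun h => funext fun j => ?_, ?_⟩
  · by_cases hj : j = i
    · subst hj
      simp [(fin_two_add_one_eq_iff _ _).2 ((h j).2 rfl)]
    · simpa [Pi.single_eq_of_ne hj] using (not_not.1 (mt (h j).1 hj)).symm
  · rintro rfl j
    by_cases hj : j = i <;> simp [hj]

theorem pair_add_single_injective :
    Function.Injective fun q : ι × (ι → Fin 2) => (q.2, q.2 + Pi.single q.1 1) := by
  rintro ⟨i, u⟩ ⟨j, v⟩ h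
  simp only [Prod.mk.injEq] at h
  obtain ⟨rfl, h⟩ := h
  rw [add_single_injective u h]

def coordParity (S : Finset ι) (v : ι → Fin 2) : Fin 2 := ∑ i ∈ S, v i

theorem coordParity_add_single (S : Finset ι) (v : ι → Fin 2) (i : ι) :
    coordParity S (v + Pi.single i 1) = coordParity S v + if i ∈ S then 1 else 0 := by
  simp only [coordParity, Pi.add_apply, sum_add_distrib, sum_pi_single']

theorem arcLabel_coordParity (S : Finset ι) (u : ι → Fin 2) (i : ι) :
    arcLabel (coordParity S) (u, u + Pi.single i 1) =
      if i ∈ S then (if coordParity S u = 0 then 1 else -1) else 0 := by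
  rw [arcLabel, coordParity_add_single]
  generalize coordParity S u = x
  split_ifs <;> revert x <;> decide

variable [Fintype ι]

def upArcs (ι : Type*) [Fintype ι] [DecidableEq ι] : Finset ((ι → Fin 2) × (ι → Fin 2)) :=
  (univ.filter fun q : ι × (ι → Fin 2) => q.2 q.1 = 0).image
    fun q => (q.2, q.2 + Pi.single q.1 1)

theorem mk_add_single_mem_upArcs_iff (u : ι → Fin 2) (i : ι) :
    (u, u + Pi.single i 1) ∈ upArcs ι ↔ u i = 0 :=
  (pair_add_single_injective.mem_finset_image (a := (i, u))).trans (by simp)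

theorem isOrientation_upArcs (n : ℕ) : IsOrientation hammingAdj (upArcs (Fin n)) := by
  refine ⟨fun p hp => ?_, fun u v huv => ?_⟩
  · obtain ⟨⟨i, u⟩, -, rfl⟩ := mem_image.1 hp
    exact hammingAdj_iff.2 ⟨i, rfl⟩
  · obtain ⟨i, rfl⟩ := hammingAdj_iff.1 huv
    rw [show (u + Pi.single i 1, u) = (u + Pi.single i 1, u + Pi.single i 1 + Pi.single i 1) by
      rw [add_single_add_single], mk_add_single_mem_upArcs_iff, mk_add_single_mem_upArcs_iff]
    simp [fin_two_add_one_eq_iff]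

theorem labelCount_upArcs (f : (ι → Fin 2) → Fin 2) (c : ℤ) :
    labelCount (upArcs ι) f c =
      ∑ i, #(univ.filter fun u : ι → Fin 2 =>
        u i = 0 ∧ arcLabel f (u, u + Pi.single i 1) = c) := by
  rw [labelCount, upArcs, filter_image, card_image_of_injective _ pair_add_single_injective,
    filter_filter, card_filter, Fintype.sum_prod_type]
  simp only [card_filter]

theorem friendly_coordParity {S : Finset ι} (hS : S.Nonempty) : Friendly (coordParity S) := by
  obtain ⟨j, hj⟩ := hS
  have h : #(univ.filter fun v => coordParity S v = 0) =
      #(univ.filter fun v => coordParity S v = 1) :=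
    card_filter_eq_of_involutive univ (σ := (· + Pi.single j 1)) (add_single_add_single · j)
      (fun _ _ => mem_univ _) fun v => by simp [coordParity_add_single, hj]
  simp [Friendly, h]

theorem two_mul_card_coord_eq_zero (i : ι) :
    2 * #(univ.filter fun u : ι → Fin 2 => u i = 0) = 2 ^ Fintype.card ι := by
  rw [two_mul_card_filter_of_involutive univ (σ := (· + Pi.single i 1))
    (add_single_add_single · i) (fun _ _ => mem_univ _) fun u => by simp [fin_two_add_one_eq_iff]]
  simp

theorem four_mul_card_coord_eq_zero_coordParity_eq {S : Finset ι} {i j : ι} (hj : j ∈ S)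
    (hij : j ≠ i) (b : Fin 2) :
    4 * #(univ.filter fun u : ι → Fin 2 => u i = 0 ∧ coordParity S u = b) =
      2 ^ Fintype.card ι := by
  have h := two_mul_card_filter_of_involutive (univ.filter fun u : ι → Fin 2 => u i = 0)
    (p := fun u => coordParity S u = b) (σ := (· + Pi.single j 1)) (add_single_add_single · j)
    (fun u hu => by simpa [Pi.single_eq_of_ne hij.symm] using hu)
    fun u => by rw [coordParity_add_single, if_pos hj, fin_two_add_one_eq_iff]
  rw [filter_filter] at h
  rw [← two_mul_card_coord_eq_zero i, ← h]
  ring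

theorem four_mul_card_arcLabel_coordParity {S : Finset ι} (hS : 2 ≤ #S) (i : ι) {c : ℤ}
    (hc : c ∈ ({-1, 0, 1} : Finset ℤ)) :
    4 * #(univ.filter fun u : ι → Fin 2 =>
        u i = 0 ∧ arcLabel (coordParity S) (u, u + Pi.single i 1) = c) =
      if i ∈ S then (if c = 0 then 0 else 2 ^ Fintype.card ι)
      else (if c = 0 then 2 * 2 ^ Fintype.card ι else 0) := by
  simp only [arcLabel_coordParity]
  simp only [mem_insert, mem_singleton] at hc
  by_cases hi : i ∈ S
  · obtain ⟨j, hj, hji⟩ := exists_mem_ne hS i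
    rcases hc with rfl | rfl | rfl
    · simpa [hi, fin_two_ne_zero_iff] using
        four_mul_card_coord_eq_zero_coordParity_eq hj hji 1
    · simp [hi, apply_ite (· = (0 : ℤ))]
    · simpa [hi] using four_mul_card_coord_eq_zero_coordParity_eq hj hji 0
  · rcases hc with rfl | rfl | rfl
    · simp [hi]
    · simp [hi, ← two_mul_card_coord_eq_zero i]; ring
    · simp [hi]

theorem four_mul_labelCount_upArcs_coordParity {S : Finset ι} (hS : 2 ≤ #S) {c : ℤ}
    (hc : c ∈ ({-1, 0, 1} : Finset ℤ)) :
    4 * labelCount (upArcs ι) (coordParity S) c =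
      if c = 0 then #Sᶜ * (2 * 2 ^ Fintype.card ι) else #S * 2 ^ Fintype.card ι := by
  rw [labelCount_upArcs, mul_sum]
  simp only [four_mul_card_arcLabel_coordParity hS _ hc]
  rw [← sum_add_sum_compl S, sum_congr rfl fun i hi => if_pos hi,
    sum_congr rfl fun i hi => if_neg (mem_compl.1 hi)]
  split_ifs <;> simp

theorem cordial23_upArcs {S : Finset ι} (hS : 2 ≤ #S) (hSc : #S = 2 * #Sᶜ) :
    Cordial23 (upArcs ι) := by
  have hcount : ∀ c ∈ ({-1, 0, 1} : Finset ℤ),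
      4 * labelCount (upArcs ι) (coordParity S) c = #S * 2 ^ Fintype.card ι := by
    intro c hc
    rw [four_mul_labelCount_upArcs_coordParity hS hc, hSc]
    split_ifs <;> ring
  refine ⟨coordParity S, friendly_coordParity (card_pos.1 (by omega)), fun c hc d hd => ?_⟩
  rw [Nat.eq_of_mul_eq_mul_left (by norm_num) ((hcount c hc).trans (hcount d hd).symm)]
  simp

end Hypercube

/-- For every positive multiple of 3 there is a `(2,3)`-cordial orientation of
the hypercube `Q_n`. -/
theorem hypercube_multiple_of_three_orientable (n : ℕ) (hn : 0 < n) (h3 : n % 3 = 0) :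
    ∃ A : Finset ((Fin n → Fin 2) × (Fin n → Fin 2)),
      IsOrientation hammingAdj A ∧ Cordial23 A := by
  obtain ⟨k, rfl⟩ := Nat.dvd_of_mod_eq_zero h3
  let S : Finset (Fin (3 * k)) := univ.map (Fin.castLEEmb (by omega : 2 * k ≤ 3 * k))
  have hS : #S = 2 * k := by simp [S]
  have hSc : #Sᶜ = k := by rw [card_compl, hS, Fintype.card_fin]; omega
  exact ⟨upArcs _, isOrientation_upArcs _, cordial23_upArcs (S := S) (by omega) (by omega)⟩
end

section
/- There exists an orientation of the 7-dimensional hypercube graph Q_7 that is a (2,3)-cordial digraph; that is, Q_7 is (2,3)-orientable. -/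
open Finset

/-! ### Auxiliary constructions -/

set_option maxRecDepth 15000
set_option maxHeartbeats 40000000

instance {n : ℕ} (u v : Fin n → Fin 2) : Decidable (hammingAdj u v) :=
  decidable_of_iff ((Finset.univ.filter (fun i => u i ≠ v i)).card = 1) Iff.rfl

/-- Decode a number in `Fin 128` to a vertex of `Q_7` by binary digits. -/
def qdec (a : Fin 128) : Fin 7 → Fin 2 :=
  fun i => ⟨a.val / 2 ^ i.val % 2, Nat.mod_lt _ (by norm_num)⟩

/-- Encode a vertex of `Q_7` as a number in `Fin 128`. -/
def qenc (v : Fin 7 → Fin 2) : Fin 128 :=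
  ⟨(v 0).val + 2*(v 1).val + 4*(v 2).val + 8*(v 3).val + 16*(v 4).val
      + 32*(v 5).val + 64*(v 6).val, by
    have h0 := (v 0).isLt; have h1 := (v 1).isLt; have h2 := (v 2).isLt
    have h3 := (v 3).isLt; have h4 := (v 4).isLt; have h5 := (v 5).isLt
    have h6 := (v 6).isLt; omega⟩

theorem qenc_qdec : ∀ a : Fin 128, qenc (qdec a) = a := by decide

theorem qdec_qenc : ∀ v : Fin 7 → Fin 2, qdec (qenc v) = v := by decide

/-- The equivalence between `Fin 128` and the vertices of `Q_7`. -/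
def qEquiv : Fin 128 ≃ (Fin 7 → Fin 2) :=
  ⟨qdec, qenc, fun a => qenc_qdec a, fun v => qdec_qenc v⟩

def c0 : List (Fin 128 × Fin 128) := [(0,1), (0,2), (0,4), (0,8), (0,16), (0,32), (0,64), (1,3), (1,5), (1,9), (1,17), (1,33), (1,65), (2,3), (2,6), (2,10), (2,18), (2,34), (2,66), (3,7), (3,11), (3,19), (3,35), (3,67), (4,5), (4,6), (4,12), (4,20), (4,36), (4,68), (5,7), (5,13), (5,21), (5,37), (5,69), (6,7), (6,14), (6,22), (6,38), (6,70), (7,15), (7,23), (7,39), (7,71), (8,9), (8,10), (8,12), (8,24), (8,40), (8,72), (9,11), (9,13), (9,25), (9,41), (9,73), (10,11), (10,14), (10,26), (10,42), (10,74), (11,15), (11,27), (11,43), (11,75)]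
def c1 : List (Fin 128 × Fin 128) := [(12,13), (12,14), (12,28), (12,44), (12,76), (13,15), (13,29), (13,45), (13,77), (14,15), (14,30), (14,46), (14,78), (15,31), (15,47), (15,79), (16,17), (16,18), (16,20), (16,24), (16,48), (16,80), (17,19), (17,21), (17,25), (17,49), (17,81), (18,19), (18,22), (18,26), (18,50), (18,82), (19,23), (19,27), (19,51), (19,83), (20,21), (20,22), (20,28), (20,52), (20,84), (21,23), (21,29), (21,53), (21,85), (22,23), (22,30), (22,54), (22,86), (23,31), (23,55), (23,87), (24,25), (24,26), (24,28), (24,56), (24,88), (25,27), (25,29), (25,57), (25,89), (26,27), (26,30), (26,58)]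
def c2 : List (Fin 128 × Fin 128) := [(26,90), (27,31), (27,59), (27,91), (28,29), (28,30), (28,60), (28,92), (29,31), (29,61), (29,93), (30,31), (30,62), (30,94), (31,63), (31,95), (32,33), (32,34), (32,36), (32,40), (32,48), (32,96), (33,35), (33,37), (33,41), (33,49), (33,97), (34,35), (34,38), (34,42), (34,50), (34,98), (35,39), (35,43), (35,51), (35,99), (36,37), (36,38), (36,44), (36,52), (36,100), (37,39), (37,45), (37,53), (37,101), (38,39), (38,46), (38,54), (38,102), (39,47), (39,55), (39,103), (40,41), (40,42), (40,44), (40,56), (40,104), (41,43), (41,45), (41,57), (41,105), (42,43), (42,46), (42,58)]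
def c3 : List (Fin 128 × Fin 128) := [(42,106), (43,47), (43,59), (43,107), (44,45), (44,46), (44,60), (44,108), (45,47), (45,61), (45,109), (46,47), (46,62), (46,110), (47,63), (47,111), (48,49), (48,50), (48,52), (48,56), (48,112), (49,51), (49,53), (49,57), (49,113), (50,51), (50,54), (50,58), (50,114), (51,55), (51,59), (51,115), (52,53), (52,54), (52,60), (52,116), (53,55), (53,61), (53,117), (54,55), (54,62), (54,118), (55,63), (55,119), (56,57), (56,58), (56,60), (56,120), (57,59), (57,61), (57,121), (58,59), (58,62), (58,122), (59,63), (59,123), (60,61), (60,62), (60,124), (61,63), (61,125), (62,63), (62,126), (63,127)]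
def c4 : List (Fin 128 × Fin 128) := [(64,65), (64,66), (64,68), (64,72), (64,80), (64,96), (65,67), (65,69), (65,73), (65,81), (65,97), (66,67), (66,70), (66,74), (66,82), (66,98), (67,71), (67,75), (67,83), (67,99), (68,69), (68,70), (68,76), (68,84), (68,100), (69,71), (69,77), (69,85), (69,101), (70,71), (70,78), (70,86), (70,102), (71,79), (71,87), (71,103), (72,73), (72,74), (72,76), (72,88), (72,104), (73,75), (73,77), (73,89), (73,105), (74,75), (74,78), (74,90), (74,106), (75,79), (75,91), (75,107), (76,77), (76,78), (76,92), (76,108), (77,79), (77,93), (77,109), (78,79), (78,94), (78,110), (79,95), (79,111)]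
def c5 : List (Fin 128 × Fin 128) := [(80,81), (80,82), (80,84), (80,88), (80,112), (81,83), (81,85), (81,89), (81,113), (82,83), (82,86), (82,90), (82,114), (83,87), (83,91), (83,115), (84,85), (84,86), (84,92), (84,116), (85,87), (85,93), (85,117), (86,87), (86,94), (86,118), (87,95), (87,119), (88,89), (88,90), (88,92), (88,120), (89,91), (89,93), (89,121), (90,91), (90,94), (90,122), (91,95), (91,123), (92,93), (92,94), (92,124), (93,95), (93,125), (94,95), (94,126), (95,127), (96,97), (96,98), (96,100), (96,104), (96,112), (97,99), (97,101), (97,105), (97,113), (98,99), (98,102), (98,106), (98,114), (99,103), (99,107), (99,115)]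
def c6 : List (Fin 128 × Fin 128) := [(100,101), (100,102), (100,108), (100,116), (101,103), (101,109), (101,117), (102,103), (102,110), (102,118), (103,111), (103,119), (104,105), (104,106), (104,108), (104,120), (105,107), (105,109), (105,121), (106,107), (106,110), (106,122), (107,111), (107,123), (108,109), (108,110), (108,124), (109,111), (109,125), (110,111), (110,126), (111,127), (112,113), (112,114), (112,116), (112,120), (113,115), (113,117), (113,121), (114,115), (114,118), (114,122), (115,119), (115,123), (116,117), (116,118), (116,124), (117,119), (117,125), (118,119), (118,126), (119,127), (120,121), (120,122), (120,124), (121,123), (121,125), (122,123), (122,126), (123,127), (124,125), (124,126), (125,127), (126,127)]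

def lPairs : List (Fin 128 × Fin 128) := c0 ++ c1 ++ c2 ++ c3 ++ c4 ++ c5 ++ c6

def sList : List Nat := [0, 1, 6, 8, 9, 11, 12, 17, 18, 20, 21, 23, 27, 29, 30, 31, 34, 35, 36, 37, 41, 42, 47, 49, 50, 51, 52, 54, 56, 57, 60, 63, 66, 67, 69, 71, 72, 75, 77, 78, 80, 83, 84, 85, 86, 89, 90, 95, 96, 98, 101, 102, 105, 107, 108, 111, 113, 114, 116, 120, 122, 123, 125, 126]

/-- The labeling on codes: `1` on `sList`, else `0`. -/
def fLab (a : Fin 128) : Fin 2 := if a.val ∈ sList then 1 else 0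

/-- The chosen vertex labeling of `Q_7`. -/
def fQ : (Fin 7 → Fin 2) → Fin 2 := fun v => fLab (qenc v)

theorem lPairs_nodup : lPairs.Nodup := by decide

/-- The arc set on codes. -/
def bArcs : Finset (Fin 128 × Fin 128) :=
  ⟨(lPairs : Multiset _), Multiset.coe_nodup.mpr lPairs_nodup⟩

theorem mem_bArcs (q : Fin 128 × Fin 128) : q ∈ bArcs ↔ q ∈ lPairs := by
  simp [bArcs]

/-- The arc set of our orientation of `Q_7`. -/
def aArcs : Finset ((Fin 7 → Fin 2) × (Fin 7 → Fin 2)) :=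
  bArcs.map (qEquiv.prodCongr qEquiv).toEmbedding

theorem mem_aArcs (p : (Fin 7 → Fin 2) × (Fin 7 → Fin 2)) :
    p ∈ aArcs ↔ (qenc p.1, qenc p.2) ∈ lPairs := by
  rw [aArcs, Finset.mem_map_equiv, ← mem_bArcs]
  rfl

theorem lPairs_forward_bool :
    (lPairs.all fun q => decide (hammingAdj (qdec q.1) (qdec q.2) ∧
      ∀ i, qdec q.1 i ≤ qdec q.2 i)) = true := by decide

theorem lPairs_forward : ∀ q ∈ lPairs,
    hammingAdj (qdec q.1) (qdec q.2) ∧ ∀ i, qdec q.1 i ≤ qdec q.2 i :=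
  fun q hq => of_decide_eq_true (List.all_eq_true.mp lPairs_forward_bool q hq)

theorem key2 : ∀ (a : Fin 128) (j : Fin 7), qdec a j = 0 →
    (a, qenc (Function.update (qdec a) j 1)) ∈ lPairs := by decide

theorem count_transfer (i : ℤ) :
    labelCount aArcs fQ i =
      (bArcs.filter (fun q => (fLab q.2 : ℤ) - (fLab q.1 : ℤ) = i)).card := by
  rw [labelCount, aArcs, Finset.filter_map, Finset.card_map]
  congr 1

theorem count_m1 : labelCount aArcs fQ (-1) = 149 := (count_transfer _).trans (by decide)

theorem count_0 : labelCount aArcs fQ 0 = 150 := (count_transfer _).trans (by decide)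

theorem count_p1 : labelCount aArcs fQ 1 = 149 := (count_transfer _).trans (by decide)

theorem card_transfer (c : Fin 2) :
    ((univ : Finset (Fin 7 → Fin 2)).filter (fun v => fQ v = c)).card =
      ((univ : Finset (Fin 128)).filter (fun a => fLab a = c)).card := by
  rw [← Finset.map_univ_equiv qEquiv, Finset.filter_map, Finset.card_map]
  congr 1

theorem card0 :
    ((univ : Finset (Fin 128)).filter (fun a => fLab a = 0)).card = 64 := by decide

theorem card1 :
    ((univ : Finset (Fin 128)).filter (fun a => fLab a = 1)).card = 64 := by decide

theorem fQ_friendly : Friendly fQ := by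
  rw [Friendly, card_transfer 0, card_transfer 1, card0, card1]
  norm_num

theorem fin2_cases {x y : Fin 2} (h : x ≠ y) :
    (x = 0 ∧ y = 1) ∨ (x = 1 ∧ y = 0) := by
  revert h; revert x y; decide

/-- `Q_7` is `(2,3)`-orientable. -/
theorem q7_orientable :
    ∃ A : Finset ((Fin 7 → Fin 2) × (Fin 7 → Fin 2)),
      IsOrientation hammingAdj A ∧ Cordial23 A := by
  refine ⟨aArcs, ⟨?_, ?_⟩, fQ, fQ_friendly, ?_⟩
  · intro p hp
    rw [mem_aArcs] at hp
    have h := (lPairs_forward _ hp).1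
    rwa [qdec_qenc, qdec_qenc] at h
  · intro u v hadj
    unfold hammingAdj at hadj
    obtain ⟨j, hj⟩ := Finset.card_eq_one.mp hadj
    have hiff : ∀ i, u i ≠ v i ↔ i = j := by
      intro i
      constructor
      · intro h
        have hm : i ∈ Finset.univ.filter (fun i => u i ≠ v i) :=
          Finset.mem_filter.mpr ⟨Finset.mem_univ _, h⟩
        rw [hj] at hm
        simpa using hm
      · intro h
        subst h
        have hm : i ∈ ({i} : Finset (Fin 7)) := Finset.mem_singleton_self i
        rw [← hj] at hm
        exact (Finset.mem_filter.mp hm).2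
    have hne : u j ≠ v j := (hiff j).mpr rfl
    have heq : ∀ i, i ≠ j → u i = v i := fun i hij =>
      not_not.mp (fun h => hij ((hiff i).mp h))
    rw [mem_aArcs, mem_aArcs]
    rcases fin2_cases hne with ⟨hu, hv⟩ | ⟨hu, hv⟩
    · have hupd : Function.update u j 1 = v := by
        funext i
        by_cases hij : i = j
        · subst hij; rw [Function.update_self, hv]
        · rw [Function.update_of_ne hij]; exact heq i hij
      have hin : (qenc u, qenc v) ∈ lPairs := by
        have h2 := key2 (qenc u) j (by rw [qdec_qenc]; exact hu)
        rw [qdec_qenc, hupd] at h2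
        exact h2
      have hout : (qenc v, qenc u) ∉ lPairs := by
        intro hc
        have h3 := (lPairs_forward _ hc).2 j
        rw [qdec_qenc, qdec_qenc, hu, hv] at h3
        exact absurd h3 (by decide)
      simp [hin, hout]
    · have hupd : Function.update v j 1 = u := by
        funext i
        by_cases hij : i = j
        · subst hij; rw [Function.update_self, hu]
        · rw [Function.update_of_ne hij]; exact (heq i hij).symm
      have hin : (qenc v, qenc u) ∈ lPairs := by
        have h2 := key2 (qenc v) j (by rw [qdec_qenc]; exact hv)
        rw [qdec_qenc, hupd] at h2
        exact h2
      have hout : (qenc u, qenc v) ∉ lPairs := by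
        intro hc
        have h3 := (lPairs_forward _ hc).2 j
        rw [qdec_qenc, qdec_qenc, hu, hv] at h3
        exact absurd h3 (by decide)
      simp [hin, hout]
  · intro i hi j hj
    fin_cases hi <;> fin_cases hj <;>
      simp [count_m1, count_0, count_p1]
end

section
/- The graph on 6 vertices consisting of three pairwise disjoint edges (a perfect matching on 6 vertices) is not (2,3)-orientable: for every orientation of its three edges and every friendly (0,1)-labeling f of its 6 vertices, the induced arc labeling g fails to satisfy −1 ≤ |g⁻¹(i)| − |g⁻¹(j)| ≤ 1 for all i, j ∈ {−1, 0, 1}. Indeed, any friendly labeling of the six vertices produces either zero or at least two arcs labeled 0. -/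
open Finset

/-- Adjacency of a perfect matching on 6 vertices: edges {0,1}, {2,3}, {4,5}. -/
def matchAdj6 (u v : Fin 6) : Prop :=
  (u, v) ∈ ({(0, 1), (1, 0), (2, 3), (3, 2), (4, 5), (5, 4)} : Finset (Fin 6 × Fin 6))

def orient (b0 b1 b2 : Bool) : Finset (Fin 6 × Fin 6) :=
  {(if b0 then ((0:Fin 6), (1:Fin 6)) else (1, 0)),
   (if b1 then ((2:Fin 6), (3:Fin 6)) else (3, 2)),
   (if b2 then ((4:Fin 6), (5:Fin 6)) else (5, 4))}

lemma orient_eq {A : Finset (Fin 6 × Fin 6)} (h : IsOrientation matchAdj6 A) :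
    A = orient (decide ((0,1) ∈ A)) (decide ((2,3) ∈ A)) (decide ((4,5) ∈ A)) := by
  obtain ⟨h1, h2⟩ := h
  have e01 : matchAdj6 0 1 := by unfold matchAdj6; decide
  have e23 : matchAdj6 2 3 := by unfold matchAdj6; decide
  have e45 : matchAdj6 4 5 := by unfold matchAdj6; decide
  ext p
  constructor
  · intro hp
    have := h1 p hp
    unfold matchAdj6 at this
    simp only [mem_insert, mem_singleton] at this
    have hp' : p ∈ A := hp
    rcases this with h | h | h | h | h | h <;>
      rw [show p = (p.1, p.2) from rfl, h] at hp' ⊢ <;>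
      simp only [orient, mem_insert, mem_singleton]
    · rw [decide_eq_true hp']; tauto
    · have : (0,1) ∉ A := fun hc => ((h2 0 1 e01).mp hc) hp'
      rw [decide_eq_false this]; tauto
    · rw [decide_eq_true hp']; tauto
    · have : (2,3) ∉ A := fun hc => ((h2 2 3 e23).mp hc) hp'
      rw [decide_eq_false this]; tauto
    · rw [decide_eq_true hp']; tauto
    · have : (4,5) ∉ A := fun hc => ((h2 4 5 e45).mp hc) hp'
      rw [decide_eq_false this]; tauto
  · intro hp
    simp only [orient, mem_insert, mem_singleton] at hp
    rcases hp with h | h | h <;> subst h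
    · by_cases hc : (0,1) ∈ A
      · rw [decide_eq_true hc]; simpa using hc
      · rw [decide_eq_false hc]
        simpa using (not_not.mp (fun hn => hc (((h2 0 1 e01)).mpr hn)))
    · by_cases hc : (2,3) ∈ A
      · rw [decide_eq_true hc]; simpa using hc
      · rw [decide_eq_false hc]
        simpa using (not_not.mp (fun hn => hc (((h2 2 3 e23)).mpr hn)))
    · by_cases hc : (4,5) ∈ A
      · rw [decide_eq_true hc]; simpa using hc
      · rw [decide_eq_false hc]
        simpa using (not_not.mp (fun hn => hc (((h2 4 5 e45)).mpr hn)))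

lemma key : ∀ b0 b1 b2 : Bool,
    (¬ Cordial23 (orient b0 b1 b2)) ∧
    ∀ f : Fin 6 → Fin 2, Friendly f →
      labelCount (orient b0 b1 b2) f 0 = 0 ∨ 2 ≤ labelCount (orient b0 b1 b2) f 0 := by
  unfold Cordial23 Friendly labelCount arcLabel
  decide


/-- The perfect matching on 6 vertices is not `(2,3)`-orientable; indeed any
friendly labeling yields either zero or at least two arcs labeled `0`. -/
theorem matching6_not_orientable :
    (∀ A : Finset (Fin 6 × Fin 6), IsOrientation matchAdj6 A → ¬ Cordial23 A) ∧
    (∀ A : Finset (Fin 6 × Fin 6), IsOrientation matchAdj6 A →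
      ∀ f : Fin 6 → Fin 2, Friendly f →
        labelCount A f 0 = 0 ∨ 2 ≤ labelCount A f 0) := by
  constructor
  · intro A hA
    rw [orient_eq hA]
    exact (key _ _ _).1
  · intro A hA
    rw [orient_eq hA]
    exact (key _ _ _).2
end

section
/- Let V be the oriented 3-dimensional hypercube on vertex set {0,1}^3 with the twelve arcs: (1,0,0)→(0,0,0); (0,0,0)→(0,1,0); (0,1,0)→(1,1,0); (1,0,0)→(1,1,0); (0,0,1)→(1,0,1); (1,1,1)→(1,0,1); (1,1,1)→(0,1,1); (0,0,1)→(0,1,1); (0,0,1)→(0,0,0); (1,0,0)→(1,0,1); (0,1,1)→(0,1,0); (1,1,1)→(1,1,0). (This orientation has exactly three vertices of out-degree 3, namely (1,0,0), (0,0,1), (1,1,1), and exactly two vertices of in-degree 3, namely (1,1,0), (1,0,1).) Then V is not (2,3)-cordial: for every friendly (0,1)-labeling f of its 8 vertices, the induced arc labeling g fails to satisfy −1 ≤ |g⁻¹(i)| − |g⁻¹(j)| ≤ 1 for all i, j ∈ {−1, 0, 1}. -/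
open Finset

/-- Vertices of the 3-dimensional hypercube: `{0,1}^3`. -/
abbrev Cube3 : Type := Fin 2 × Fin 2 × Fin 2

/-- The oriented 3-cube `V` of the paper, given by its twelve arcs. -/
def Vcube : Finset (Cube3 × Cube3) :=
  { ((1,0,0),(0,0,0)), ((0,0,0),(0,1,0)), ((0,1,0),(1,1,0)), ((1,0,0),(1,1,0)),
    ((0,0,1),(1,0,1)), ((1,1,1),(1,0,1)), ((1,1,1),(0,1,1)), ((0,0,1),(0,1,1)),
    ((0,0,1),(0,0,0)), ((1,0,0),(1,0,1)), ((0,1,1),(0,1,0)), ((1,1,1),(1,1,0)) }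

set_option maxRecDepth 100000 in
/-- The oriented cube `V` is not `(2,3)`-cordial: no friendly vertex labeling
induces an arc labeling whose three label counts pairwise differ by at most one. -/
theorem Vcube_not_cordial : ¬ Cordial23 Vcube := by
  unfold Cordial23 Friendly
  decide
end

section
/- Let D be a finite digraph on a vertex set of even cardinality 2p, with no digons, equipped with a friendly (0,1)-labeling f whose induced arc labeling g satisfies Λ_{f,g}(D) = (α, β, γ). Form the digraph D' consisting of two disjoint copies of D, where the first copy carries the labeling f and the second copy carries the complementary labeling f̄ (f̄(v) = 1 − f(v)), together with an arc from each vertex x of the first copy to the corresponding vertex x of the second copy. Then the vertex labeling of D' combining f on the first copy and f̄ on the second copy is friendly, and its induced arc labeling g' satisfies Λ(D') = (α + β + p, α + β + p, 2γ). -/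
open Finset

/-- Two disjoint copies of the digraph `A` together with an arc from each vertex
`x` of the first copy to the corresponding vertex `x` of the second copy. -/
def doubleCross {V : Type*} [Fintype V] [DecidableEq V] (A : Finset (V × V)) :
    Finset ((V ⊕ V) × (V ⊕ V)) :=
  A.image (fun q => (Sum.inl q.1, Sum.inl q.2)) ∪
    A.image (fun q => (Sum.inr q.1, Sum.inr q.2)) ∪
    Finset.univ.image (fun v : V => ((Sum.inl v : V ⊕ V), (Sum.inr v : V ⊕ V)))

/-! The second copy carries `1 - f`, so each of its arcs gets the negated label of the
corresponding arc of the first copy: together the two copies have `α + β` arcs of each label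
`±1` and `2γ` of label `0`. The arc from `x` to its twin is labeled `1 - 2 f(x)`, hence `1` on
the fibre `f = 0` and `-1` on the fibre `f = 1`; on `2p` vertices a friendly labeling has both
fibres of size `p`. -/

namespace Fin

lemma coe_one_sub_fin_two (x : Fin 2) : ((1 - x : Fin 2) : ℤ) = 1 - (x : ℤ) := by
  fin_cases x <;> rfl

lemma one_sub_fin_two_eq_iff (x y : Fin 2) : 1 - x = y ↔ x = 1 - y := by
  fin_cases x <;> fin_cases y <;> decide

end Fin

section Labeling

variable {V W : Type*}

lemma arcLabel_one_sub (f : V → Fin 2) (q : V × V) :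
    arcLabel (fun v => 1 - f v) q = -arcLabel f q := by
  simp only [arcLabel, Fin.coe_one_sub_fin_two]
  ring

lemma labelCount_one_sub (A : Finset (V × V)) (f : V → Fin 2) (i : ℤ) :
    labelCount A (fun v => 1 - f v) i = labelCount A f (-i) := by
  simp only [labelCount, arcLabel_one_sub, neg_eq_iff_eq_neg]

lemma labelCount_union [DecidableEq V] {A B : Finset (V × V)} (h : Disjoint A B)
    (f : V → Fin 2) (i : ℤ) :
    labelCount (A ∪ B) f i = labelCount A f i + labelCount B f i := by
  rw [labelCount, filter_union, card_union_of_disjoint (disjoint_filter_filter h)]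
  rfl

lemma labelCount_image [DecidableEq W] (A : Finset (V × V)) {e : V → W}
    (he : Function.Injective e) (f : W → Fin 2) (i : ℤ) :
    labelCount (A.image fun q => (e q.1, e q.2)) f i = labelCount A (f ∘ e) i := by
  rw [labelCount, filter_image]
  exact card_image_of_injective _ (he.prodMap he)

lemma card_filter_sumElim [Fintype V] (f g : V → Fin 2) (j : Fin 2) :
    #{x | Sum.elim f g x = j} = #{v | f v = j} + #{v | g v = j} := by
  simp only [card_filter, Fintype.sum_sum_type, Sum.elim_inl, Sum.elim_inr]
  rfl

lemma card_filter_one_sub [Fintype V] (f : V → Fin 2) (j : Fin 2) :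
    #{v | 1 - f v = j} = #{v | f v = 1 - j} := by
  simp only [Fin.one_sub_fin_two_eq_iff]

lemma card_filter_eq_zero_add_card_filter_eq_one [Fintype V] (f : V → Fin 2) :
    #{v | f v = 0} + #{v | f v = 1} = Fintype.card V := by
  rw [← card_univ, ← card_filter_add_card_filter_not (s := univ) (p := fun v => f v = 0)]
  congr 2
  refine filter_congr fun v _ => ?_
  generalize f v = x
  fin_cases x <;> simp

lemma Friendly.card_filter_eq [Fintype V] {f : V → Fin 2} (hf : Friendly f) {p : ℕ}
    (hcard : Fintype.card V = 2 * p) (j : Fin 2) : #{v | f v = j} = p := by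
  have hsum := card_filter_eq_zero_add_card_filter_eq_one f
  obtain ⟨hl, hr⟩ := hf
  fin_cases j <;> simp only [Fin.zero_eta, Fin.mk_one] <;> omega

lemma friendly_sumElim_one_sub [Fintype V] (f : V → Fin 2) :
    Friendly (Sum.elim f fun v => 1 - f v) := by
  simp only [Friendly, card_filter_sumElim, card_filter_one_sub, sub_zero, sub_self]
  constructor <;> omega

end Labeling

section DoubleCross

variable {V : Type*} [Fintype V]

lemma labelCount_image_inl_inr [DecidableEq V] (f g : V → Fin 2) (i : ℤ) :
    labelCount (univ.image fun v => ((Sum.inl v : V ⊕ V), (Sum.inr v : V ⊕ V)))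
      (Sum.elim f g) i = #{v | (g v : ℤ) - f v = i} := by
  rw [labelCount, filter_image]
  exact card_image_of_injective _ fun v w h => Sum.inl_injective (congrArg Prod.fst h)

lemma labelCount_doubleCross [DecidableEq V] (A : Finset (V × V)) (f : V → Fin 2) (i : ℤ) :
    labelCount (doubleCross A) (Sum.elim f fun v => 1 - f v) i =
      labelCount A f i + labelCount A f (-i) + #{v | 1 - 2 * (f v : ℤ) = i} := by
  have hcopies : Disjoint (A.image fun q => ((Sum.inl q.1 : V ⊕ V), (Sum.inl q.2 : V ⊕ V)))
      (A.image fun q => (Sum.inr q.1, Sum.inr q.2)) := by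
    simp [disjoint_left]
  have hcross : Disjoint (A.image (fun q => ((Sum.inl q.1 : V ⊕ V), (Sum.inl q.2 : V ⊕ V))) ∪
      A.image fun q => (Sum.inr q.1, Sum.inr q.2))
      (univ.image fun v => (Sum.inl v, Sum.inr v)) := by
    simp [disjoint_left]
  rw [doubleCross, labelCount_union hcross, labelCount_union hcopies,
    labelCount_image _ Sum.inl_injective, labelCount_image _ Sum.inr_injective,
    Sum.elim_comp_inl, Sum.elim_comp_inr, labelCount_one_sub, labelCount_image_inl_inr]
  simp only [Fin.coe_one_sub_fin_two, sub_sub, ← two_mul]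

lemma card_filter_one_sub_two_mul_eq (f : V → Fin 2) {i : ℤ} {j : Fin 2}
    (hij : 1 - 2 * (j : ℤ) = i) : #{v | 1 - 2 * (f v : ℤ) = i} = #{v | f v = j} := by
  subst hij
  refine congrArg card (filter_congr fun v _ => ⟨fun h => Fin.ext (by omega), ?_⟩)
  rintro rfl
  rfl

lemma card_filter_one_sub_two_mul_eq_zero (f : V → Fin 2) :
    #{v | 1 - 2 * (f v : ℤ) = 0} = 0 := by
  simp only [card_eq_zero, filter_eq_empty_iff, mem_univ, true_implies]
  omega

end DoubleCross

theorem double_with_complement_general {V : Type*} [Fintype V] [DecidableEq V]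
    (A : Finset (V × V)) (p : ℕ) (hcard : Fintype.card V = 2 * p)
    (f : V → Fin 2) (hf : Friendly f) (α β γ : ℕ)
    (h1 : labelCount A f 1 = α) (h2 : labelCount A f (-1) = β)
    (h3 : labelCount A f 0 = γ) :
    Friendly (Sum.elim f (fun v => 1 - f v)) ∧
    labelCount (doubleCross A) (Sum.elim f (fun v => 1 - f v)) 1 = α + β + p ∧
    labelCount (doubleCross A) (Sum.elim f (fun v => 1 - f v)) (-1) = α + β + p ∧
    labelCount (doubleCross A) (Sum.elim f (fun v => 1 - f v)) 0 = 2 * γ := by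
  have hp := hf.card_filter_eq hcard
  refine ⟨friendly_sumElim_one_sub f, ?_, ?_, ?_⟩
  · rw [labelCount_doubleCross, h1, h2,
      card_filter_one_sub_two_mul_eq f (i := 1) (j := 0) rfl, hp]
  · rw [labelCount_doubleCross, neg_neg, h1, h2,
      card_filter_one_sub_two_mul_eq f (i := -1) (j := 1) rfl, hp, Nat.add_comm β]
  · rw [labelCount_doubleCross, neg_zero, h3, card_filter_one_sub_two_mul_eq_zero]
    ring

/-- Doubling a digon-free digraph on `2p` vertices, labeling the second copy by
the complementary labeling and joining corresponding vertices, yields a friendly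
labeling with `Λ = (α + β + p, α + β + p, 2γ)`. -/
theorem double_with_complement {V : Type*} [Fintype V] [DecidableEq V]
    (A : Finset (V × V)) (hA : NoDigons A) (p : ℕ) (hcard : Fintype.card V = 2 * p)
    (f : V → Fin 2) (hf : Friendly f) (α β γ : ℕ)
    (h1 : labelCount A f 1 = α) (h2 : labelCount A f (-1) = β)
    (h3 : labelCount A f 0 = γ) :
    Friendly (Sum.elim f (fun v => 1 - f v)) ∧
    labelCount (doubleCross A) (Sum.elim f (fun v => 1 - f v)) 1 = α + β + p ∧
    labelCount (doubleCross A) (Sum.elim f (fun v => 1 - f v)) (-1) = α + β + p ∧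
    labelCount (doubleCross A) (Sum.elim f (fun v => 1 - f v)) 0 = 2 * γ :=
  double_with_complement_general A p hcard f hf α β γ h1 h2 h3
end

section
/- Suppose k is a positive multiple of 3 and there exists an orientation Q_k of the k-dimensional hypercube graph together with a friendly vertex labeling f whose induced arc labeling g satisfies Λ_{f,g}(Q_k) = (m, m, m), where m = k·2^(k-1)/3. Then there exists an orientation Q_{k+3} of the (k+3)-dimensional hypercube graph together with a friendly vertex labeling f' whose induced arc labeling g' satisfies Λ_{f',g'}(Q_{k+3}) = ((k+3)·2^(k+2)/3, (k+3)·2^(k+2)/3, (k+3)·2^(k+2)/3); in particular Q_{k+3} is (2,3)-cordial. -/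
open Finset

section Aux

instance hammingAdjDec {n : ℕ} (u v : Fin n → Fin 2) : Decidable (hammingAdj u v) := by
  unfold hammingAdj; infer_instance

/-- The vertex labeling of `Q_3` with cut size 8. -/
def q3 : (Fin 3 → Fin 2) → Fin 2 := fun w => w 0 + w 1

/-- A fixed orientation of `Q_3` with balanced induced label counts for `q3`. -/
def B3 : Finset ((Fin 3 → Fin 2) × (Fin 3 → Fin 2)) :=
  univ.filter (fun p => hammingAdj p.1 p.2 ∧
    ((p.1 0 ≠ p.2 0 ∧ q3 p.1 = 0) ∨ (p.1 1 ≠ p.2 1 ∧ q3 p.1 = 1) ∨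
     (p.1 2 ≠ p.2 2 ∧ p.1 2 = 0)))

lemma B3_adj : ∀ p ∈ B3, hammingAdj p.1 p.2 := by decide

lemma B3_orient : ∀ u v : Fin 3 → Fin 2, hammingAdj u v → (((u, v) ∈ B3) ↔ ((v, u) ∉ B3)) := by
  decide

lemma B3_count : labelCount B3 q3 1 = 4 ∧ labelCount B3 q3 (-1) = 4 ∧ labelCount B3 q3 0 = 4 := by
  decide

lemma q3_fiber : ∀ a c : Fin 2, (univ.filter (fun w : Fin 3 → Fin 2 => a + q3 w = c)).card = 4 := by
  decide

lemma shift_lemma : ∀ c a b : Fin 2, ((b + c : Fin 2) : ℤ) - ((a + c : Fin 2) : ℤ)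
    = if c = 0 then ((b : ℤ) - a) else -((b : ℤ) - a) := by decide

/-- The splitting equivalence `{0,1}^k × {0,1}^3 ≃ {0,1}^(k+3)`. -/
def E (k : ℕ) : ((Fin k → Fin 2) × (Fin 3 → Fin 2)) ≃ (Fin (k + 3) → Fin 2) :=
  (Equiv.sumArrowEquivProdArrow (Fin k) (Fin 3) (Fin 2)).symm.trans
    (Equiv.arrowCongr finSumFinEquiv (Equiv.refl (Fin 2)))

lemma E_castAdd {k : ℕ} (u : Fin k → Fin 2) (w : Fin 3 → Fin 2) (i : Fin k) :
    E k (u, w) (Fin.castAdd 3 i) = u i := by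
  simp [E, Equiv.sumArrowEquivProdArrow]

lemma E_natAdd {k : ℕ} (u : Fin k → Fin 2) (w : Fin 3 → Fin 2) (i : Fin 3) :
    E k (u, w) (Fin.natAdd k i) = w i := by
  simp [E, Equiv.sumArrowEquivProdArrow]

lemma card_diff_zero {n : ℕ} (u v : Fin n → Fin 2) :
    (univ.filter fun i => u i ≠ v i).card = 0 ↔ u = v := by
  simp [card_eq_zero, filter_eq_empty_iff, funext_iff]

lemma adj_ne {n : ℕ} {u v : Fin n → Fin 2} (h : hammingAdj u v) : u ≠ v := by
  intro he; subst he; unfold hammingAdj at h; simp at h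

lemma adjE {k : ℕ} (u v : Fin k → Fin 2) (w w' : Fin 3 → Fin 2) :
    hammingAdj (E k (u, w)) (E k (v, w')) ↔
      (hammingAdj u v ∧ w = w') ∨ (u = v ∧ hammingAdj w w') := by
  have hcard : (univ.filter fun i => E k (u, w) i ≠ E k (v, w') i).card
      = (univ.filter fun i => u i ≠ v i).card + (univ.filter fun j => w j ≠ w' j).card := by
    rw [card_filter, card_filter, card_filter, Fin.sum_univ_add]
    simp [E_castAdd, E_natAdd]
  unfold hammingAdj
  rw [hcard, Nat.add_eq_one_iff]
  rw [← card_diff_zero u v, ← card_diff_zero w w']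
  tauto

lemma card_filter_equiv {α β : Type*} [Fintype α] [Fintype β] (e : α ≃ β)
    (p : β → Prop) [DecidablePred p] :
    (univ.filter p).card = ((univ : Finset α).filter fun a => p (e a)).card := by
  rw [← Fintype.card_subtype, ← Fintype.card_subtype]
  exact Fintype.card_congr ((e.subtypeEquiv (fun a => Iff.rfl)).symm)

variable {k : ℕ}

/-- The combined vertex labeling on the product. -/
def fP (f : (Fin k → Fin 2) → Fin 2) :
    ((Fin k → Fin 2) × (Fin 3 → Fin 2)) → Fin 2 := fun p => f p.1 + q3 p.2

/-- Arcs inside the 8 copies of `Q_k`. -/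
def A1 (A : Finset ((Fin k → Fin 2) × (Fin k → Fin 2))) :
    Finset (((Fin k → Fin 2) × (Fin 3 → Fin 2)) × ((Fin k → Fin 2) × (Fin 3 → Fin 2))) :=
  (A ×ˢ (univ : Finset (Fin 3 → Fin 2))).image (fun q => ((q.1.1, q.2), (q.1.2, q.2)))

/-- Arcs inside the `2^k` copies of `Q_3`. -/
def A2 (k : ℕ) :
    Finset (((Fin k → Fin 2) × (Fin 3 → Fin 2)) × ((Fin k → Fin 2) × (Fin 3 → Fin 2))) :=
  ((univ : Finset (Fin k → Fin 2)) ×ˢ B3).image (fun q => ((q.1, q.2.1), (q.1, q.2.2)))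

def APr (A : Finset ((Fin k → Fin 2) × (Fin k → Fin 2))) :
    Finset (((Fin k → Fin 2) × (Fin 3 → Fin 2)) × ((Fin k → Fin 2) × (Fin 3 → Fin 2))) :=
  A1 A ∪ A2 k

lemma mem_A1 (A : Finset ((Fin k → Fin 2) × (Fin k → Fin 2)))
    (u v : Fin k → Fin 2) (w w' : Fin 3 → Fin 2) :
    ((u, w), (v, w')) ∈ A1 A ↔ ((u, v) ∈ A ∧ w = w') := by
  simp only [A1, mem_image, mem_product, mem_univ, and_true, Prod.ext_iff, Prod.exists]
  aesop

lemma mem_A2 (u v : Fin k → Fin 2) (w w' : Fin 3 → Fin 2) :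
    ((u, w), (v, w')) ∈ A2 k ↔ (u = v ∧ (w, w') ∈ B3) := by
  simp only [A2, mem_image, mem_product, mem_univ, true_and, Prod.ext_iff, Prod.exists]
  aesop

lemma mem_APr (A : Finset ((Fin k → Fin 2) × (Fin k → Fin 2)))
    (u v : Fin k → Fin 2) (w w' : Fin 3 → Fin 2) :
    ((u, w), (v, w')) ∈ APr A ↔
      (((u, v) ∈ A ∧ w = w') ∨ (u = v ∧ (w, w') ∈ B3)) := by
  rw [APr, mem_union, mem_A1, mem_A2]

lemma g1_inj : Function.Injective
    (fun q : ((Fin k → Fin 2) × (Fin k → Fin 2)) × (Fin 3 → Fin 2) =>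
      ((q.1.1, q.2), (q.1.2, q.2))) := by
  rintro ⟨⟨a, b⟩, c⟩ ⟨⟨a', b'⟩, c'⟩ h
  simp only [Prod.mk.injEq] at h
  simp only [Prod.mk.injEq]
  tauto

lemma g2_inj : Function.Injective
    (fun q : (Fin k → Fin 2) × ((Fin 3 → Fin 2) × (Fin 3 → Fin 2)) =>
      ((q.1, q.2.1), (q.1, q.2.2))) := by
  rintro ⟨a, ⟨b, c⟩⟩ ⟨a', ⟨b', c'⟩⟩ h
  simp only [Prod.mk.injEq] at h
  simp only [Prod.mk.injEq]
  tauto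

lemma arcLabel_copy (f : (Fin k → Fin 2) → Fin 2) (a b : Fin k → Fin 2) (w : Fin 3 → Fin 2) :
    arcLabel (fP f) ((a, w), (b, w))
      = if q3 w = 0 then arcLabel f (a, b) else -(arcLabel f (a, b)) := by
  simp only [arcLabel, fP]
  exact shift_lemma (q3 w) (f a) (f b)

lemma arcLabel_cross (f : (Fin k → Fin 2) → Fin 2) (x : Fin k → Fin 2) (w w' : Fin 3 → Fin 2) :
    arcLabel (fP f) ((x, w), (x, w'))
      = if f x = 0 then arcLabel q3 (w, w') else -(arcLabel q3 (w, w')) := by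
  simp only [arcLabel, fP]
  rw [add_comm (f x) (q3 w), add_comm (f x) (q3 w')]
  exact shift_lemma (f x) (q3 w) (q3 w')

lemma count_A1 (A : Finset ((Fin k → Fin 2) × (Fin k → Fin 2)))
    (f : (Fin k → Fin 2) → Fin 2) {m : ℕ}
    (hbal : ∀ j ∈ ({-1, 0, 1} : Finset ℤ), labelCount A f j = m)
    (i : ℤ) (hi : i ∈ ({-1, 0, 1} : Finset ℤ)) :
    labelCount (A1 A) (fP f) i = 8 * m := by
  have hinegmem : -i ∈ ({-1, 0, 1} : Finset ℤ) := by fin_cases hi <;> decide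
  rw [labelCount, A1, filter_image, card_image_of_injective _ g1_inj, card_filter,
    Finset.sum_product, Finset.sum_comm]
  have hrow : ∀ w : Fin 3 → Fin 2,
      (∑ x ∈ A, if arcLabel (fP f) ((x.1, w), (x.2, w)) = i then 1 else 0) = m := by
    intro w
    have key : ∀ x : (Fin k → Fin 2) × (Fin k → Fin 2),
        (arcLabel (fP f) ((x.1, w), (x.2, w)) = i) ↔
          (arcLabel f x = (if q3 w = 0 then i else -i)) := by
      intro x
      rw [show ((x.1, w), (x.2, w)) = ((x.1, w), (x.2, w)) from rfl, arcLabel_copy]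
      have hx : arcLabel f (x.1, x.2) = arcLabel f x := by rfl
      split_ifs with h
      · rw [hx]
      · rw [hx]; constructor <;> intro hh <;> omega
    calc (∑ x ∈ A, if arcLabel (fP f) ((x.1, w), (x.2, w)) = i then 1 else 0)
        = ∑ x ∈ A, if arcLabel f x = (if q3 w = 0 then i else -i) then 1 else 0 := by
          refine Finset.sum_congr rfl fun x _ => ?_
          rw [if_congr (key x) rfl rfl]
      _ = labelCount A f (if q3 w = 0 then i else -i) := by
          rw [labelCount, card_filter]
      _ = m := by
          split_ifs with h
          · exact hbal i hi
          · exact hbal (-i) hinegmem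
  calc (∑ w : Fin 3 → Fin 2, ∑ x ∈ A,
          if arcLabel (fP f) ((x.1, w), (x.2, w)) = i then 1 else 0)
      = ∑ _w : Fin 3 → Fin 2, m := Finset.sum_congr rfl fun w _ => hrow w
    _ = 8 * m := by
        rw [Finset.sum_const, smul_eq_mul]
        congr 1

lemma count_A2 (f : (Fin k → Fin 2) → Fin 2) (i : ℤ) (hi : i ∈ ({-1, 0, 1} : Finset ℤ)) :
    labelCount (A2 k) (fP f) i = 2 ^ k * 4 := by
  have hB : ∀ j ∈ ({-1, 0, 1} : Finset ℤ), labelCount B3 q3 j = 4 := by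
    intro j hj
    fin_cases hj
    · exact B3_count.2.1
    · exact B3_count.2.2
    · exact B3_count.1
  have hinegmem : -i ∈ ({-1, 0, 1} : Finset ℤ) := by fin_cases hi <;> decide
  rw [labelCount, A2, filter_image, card_image_of_injective _ g2_inj, card_filter,
    Finset.sum_product]
  have hrow : ∀ x : Fin k → Fin 2,
      (∑ y ∈ B3, if arcLabel (fP f) ((x, y.1), (x, y.2)) = i then 1 else 0) = 4 := by
    intro x
    have key : ∀ y : (Fin 3 → Fin 2) × (Fin 3 → Fin 2),
        (arcLabel (fP f) ((x, y.1), (x, y.2)) = i) ↔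
          (arcLabel q3 y = (if f x = 0 then i else -i)) := by
      intro y
      rw [arcLabel_cross]
      have hy : arcLabel q3 (y.1, y.2) = arcLabel q3 y := by rfl
      split_ifs with h
      · rw [hy]
      · rw [hy]; constructor <;> intro hh <;> omega
    calc (∑ y ∈ B3, if arcLabel (fP f) ((x, y.1), (x, y.2)) = i then 1 else 0)
        = ∑ y ∈ B3, if arcLabel q3 y = (if f x = 0 then i else -i) then 1 else 0 := by
          refine Finset.sum_congr rfl fun y _ => ?_
          rw [if_congr (key y) rfl rfl]
      _ = labelCount B3 q3 (if f x = 0 then i else -i) := by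
          rw [labelCount, card_filter]
      _ = 4 := by
          split_ifs with h
          · exact hB i hi
          · exact hB (-i) hinegmem
  calc (∑ x : Fin k → Fin 2, ∑ y ∈ B3,
          if arcLabel (fP f) ((x, y.1), (x, y.2)) = i then 1 else 0)
      = ∑ _x : Fin k → Fin 2, 4 := Finset.sum_congr rfl fun x _ => hrow x
    _ = 2 ^ k * 4 := by
        rw [Finset.sum_const, smul_eq_mul]
        congr 1
        rw [card_univ]
        simp

lemma arith_lemma (k c : ℕ) (hk : 0 < k) (hkc : k = 3 * c) :
    8 * (k * 2 ^ (k - 1) / 3) + 2 ^ k * 4 = (k + 3) * 2 ^ (k + 2) / 3 := by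
  have e1 : 2 ^ k = 2 ^ (k - 1) * 2 := by
    rw [← pow_succ]; congr 1; omega
  have e2 : 2 ^ (k + 2) = 2 ^ (k - 1) * 8 := by
    rw [show k + 2 = (k - 1) + 3 by omega, pow_add]; norm_num
  have hL : k * 2 ^ (k - 1) / 3 = c * 2 ^ (k - 1) := by
    rw [hkc, mul_assoc, Nat.mul_div_cancel_left _ (by norm_num : 0 < 3)]
  have hR : (k + 3) * 2 ^ (k + 2) / 3 = (c + 1) * 2 ^ (k + 2) := by
    rw [hkc, show (3 * c + 3) = 3 * (c + 1) by ring, mul_assoc,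
      Nat.mul_div_cancel_left _ (by norm_num : 0 < 3)]
  rw [hL, hR, e1, e2]
  ring

end Aux

/-- The inductive step of the paper: a `(2,3)`-cordial orientation of `Q_k` with
perfectly balanced label counts yields one of `Q_{k+3}`. -/
theorem hypercube_step_three (k : ℕ) (hk : 0 < k) (h3 : k % 3 = 0)
    (A : Finset ((Fin k → Fin 2) × (Fin k → Fin 2)))
    (hA : IsOrientation hammingAdj A)
    (f : (Fin k → Fin 2) → Fin 2) (hf : Friendly f)
    (h1 : labelCount A f 1 = k * 2 ^ (k - 1) / 3)
    (h2 : labelCount A f (-1) = k * 2 ^ (k - 1) / 3)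
    (h0 : labelCount A f 0 = k * 2 ^ (k - 1) / 3) :
    ∃ A' : Finset ((Fin (k + 3) → Fin 2) × (Fin (k + 3) → Fin 2)),
      IsOrientation hammingAdj A' ∧
      (∃ f' : (Fin (k + 3) → Fin 2) → Fin 2, Friendly f' ∧
        labelCount A' f' 1 = (k + 3) * 2 ^ (k + 2) / 3 ∧
        labelCount A' f' (-1) = (k + 3) * 2 ^ (k + 2) / 3 ∧
        labelCount A' f' 0 = (k + 3) * 2 ^ (k + 2) / 3) ∧
      Cordial23 A' := by
  classical
  obtain ⟨c, hkc⟩ := Nat.dvd_of_mod_eq_zero h3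
  set m := k * 2 ^ (k - 1) / 3 with hmdef
  have hbal : ∀ j ∈ ({-1, 0, 1} : Finset ℤ), labelCount A f j = m := by
    intro j hj; fin_cases hj
    · exact h2
    · exact h0
    · exact h1
  have hEinj : Function.Injective (Prod.map (E k) (E k)) :=
    Function.Injective.prodMap (E k).injective (E k).injective
  -- the big arc set and labeling
  have htrans : ∀ i : ℤ,
      labelCount ((APr A).image (Prod.map (E k) (E k)))
        (fun x => fP f ((E k).symm x)) i = labelCount (APr A) (fP f) i := by
    intro i
    rw [labelCount, labelCount, filter_image, card_image_of_injective _ hEinj]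
    congr 1
    apply filter_congr
    intro p _
    simp [arcLabel, fP]
  have hsplit : ∀ i : ℤ, labelCount (APr A) (fP f) i
      = labelCount (A1 A) (fP f) i + labelCount (A2 k) (fP f) i := by
    intro i
    rw [labelCount, labelCount, labelCount, APr, filter_union]
    apply card_union_of_disjoint
    apply disjoint_filter_filter
    rw [Finset.disjoint_left]
    rintro ⟨⟨u, w⟩, ⟨v, w'⟩⟩ hp1 hp2
    rw [mem_A1] at hp1
    rw [mem_A2] at hp2
    exact adj_ne (hA.1 _ hp1.1) hp2.1
  have hcount : ∀ i ∈ ({-1, 0, 1} : Finset ℤ),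
      labelCount ((APr A).image (Prod.map (E k) (E k)))
        (fun x => fP f ((E k).symm x)) i = (k + 3) * 2 ^ (k + 2) / 3 := by
    intro i hi
    rw [htrans, hsplit, count_A1 A f hbal i hi, count_A2 f i hi, hmdef]
    exact arith_lemma k c hk hkc
  have hcnt : ∀ cv : Fin 2,
      ((univ : Finset (Fin (k + 3) → Fin 2)).filter
        fun v => fP f ((E k).symm v) = cv).card = 2 ^ k * 4 := by
    intro cv
    rw [card_filter_equiv (E k)]
    have heq : (((univ : Finset ((Fin k → Fin 2) × (Fin 3 → Fin 2)))).filter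
          fun a => fP f ((E k).symm ((E k) a)) = cv)
        = (univ.filter fun a => fP f a = cv) := by
      apply filter_congr
      intro a _
      simp
    rw [heq, card_filter, Fintype.sum_prod_type]
    have hrow : ∀ u : Fin k → Fin 2,
        (∑ w : Fin 3 → Fin 2, if fP f (u, w) = cv then 1 else 0) = 4 := by
      intro u
      rw [← card_filter]
      exact q3_fiber (f u) cv
    calc (∑ u : Fin k → Fin 2, ∑ w : Fin 3 → Fin 2, if fP f (u, w) = cv then 1 else 0)
        = ∑ _u : Fin k → Fin 2, 4 := Finset.sum_congr rfl fun u _ => hrow u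
      _ = 2 ^ k * 4 := by
          rw [Finset.sum_const, smul_eq_mul]
          congr 1
          rw [card_univ]
          simp
  have hfriendly : Friendly (fun x => fP f ((E k).symm x)) := by
    constructor <;> rw [hcnt 0, hcnt 1] <;> simp
  have hmem1 : (1 : ℤ) ∈ ({-1, 0, 1} : Finset ℤ) := by decide
  have hmemn1 : (-1 : ℤ) ∈ ({-1, 0, 1} : Finset ℤ) := by decide
  have hmem0 : (0 : ℤ) ∈ ({-1, 0, 1} : Finset ℤ) := by decide
  have memA' : ∀ a b : (Fin k → Fin 2) × (Fin 3 → Fin 2),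
      ((E k) a, (E k) b) ∈ (APr A).image (Prod.map (E k) (E k)) ↔ (a, b) ∈ APr A := by
    intro a b
    rw [mem_image]
    constructor
    · rintro ⟨q, hq, heq⟩
      have h1' := congrArg Prod.fst heq
      have h2' := congrArg Prod.snd heq
      simp only [Prod.map_fst, Prod.map_snd] at h1' h2'
      have : q = (a, b) := Prod.ext ((E k).injective h1') ((E k).injective h2')
      rwa [this] at hq
    · intro h
      exact ⟨(a, b), h, rfl⟩
  refine ⟨(APr A).image (Prod.map (E k) (E k)), ⟨?_, ?_⟩,
    ⟨fun x => fP f ((E k).symm x), hfriendly, hcount 1 hmem1, hcount (-1) hmemn1,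
      hcount 0 hmem0⟩, ?_⟩
  · intro p hp
    rw [mem_image] at hp
    obtain ⟨⟨⟨u, w⟩, ⟨v, w'⟩⟩, hq, rfl⟩ := hp
    show hammingAdj (E k (u, w)) (E k (v, w'))
    rw [adjE]
    rw [mem_APr] at hq
    rcases hq with ⟨hA1', rfl⟩ | ⟨rfl, hB⟩
    · exact Or.inl ⟨hA.1 _ hA1', rfl⟩
    · exact Or.inr ⟨rfl, B3_adj _ hB⟩
  · intro x y hxy
    obtain ⟨⟨u, w⟩, rfl⟩ := (E k).surjective x
    obtain ⟨⟨v, w'⟩, rfl⟩ := (E k).surjective y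
    rw [adjE] at hxy
    rw [memA', memA', mem_APr, mem_APr]
    rcases hxy with ⟨huv, rfl⟩ | ⟨rfl, hww⟩
    · have hne : u ≠ v := adj_ne huv
      have hor := hA.2 u v huv
      simp only [hne, Ne.symm hne, false_and, and_false, or_false, and_true, not_or,
        not_false_eq_true]
      tauto
    · have hne : w ≠ w' := adj_ne hww
      have hor := B3_orient w w' hww
      simp only [hne, Ne.symm hne, false_and, and_false, or_false, false_or, true_and, not_or,
        not_false_eq_true]
      tauto
  · refine ⟨fun x => fP f ((E k).symm x), hfriendly, ?_⟩
    intro i hi j hj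
    have hi' := hcount i hi
    have hj' := hcount j hj
    omega
end
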